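/- For every real number q with 1/2 < q < 1, the endpoints lb_K(q) := 1 - T_K(q) and ub_K(q) := q²(1 - T_K(q)) / (q²(1 - T_K(q)) + (1-q)² T_K(q)) of the incentive-compatible prior interval are strictly decreasing along odd batch sizes: for every odd positive integer K, lb_{K+2}(q) < lb_K(q) and ub_{K+2}(q) < ub_K(q). Moreover ub_1(q) = q and lim_{n→∞} lb_{2n+1}(q) = 0. -/

import Mathlib

open Finset Filter

/-- Tail of a Binomial(K,q): probability of at least (K+1)/2 successes. -/
noncomputable def binTail (q : ℝ) (K : ℕ) : ℝ :=
  ∑ y ∈ Finset.Icc ((K + 1) / 2) K, (K.choose y : ℝ) * q ^ y * (1 - q) ^ (K - y)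

/-- Lower endpoint of the incentive-compatible prior interval for batch size K. -/
noncomputable def lb (q : ℝ) (K : ℕ) : ℝ := 1 - binTail q K

/-- Upper endpoint of the incentive-compatible prior interval for batch size K. -/
noncomputable def ub (q : ℝ) (K : ℕ) : ℝ :=
  q ^ 2 * (1 - binTail q K) /
    (q ^ 2 * (1 - binTail q K) + (1 - q) ^ 2 * binTail q K)

/-! Write `L_n(j)` for the probability that a Binomial(n, q) variable is below `j`, so that
`lb q K = L_K((K+1)/2)`. Conditioning on the last trial gives
`L_{n+1}(j+1) = L_n(j+1) - q·P(S_n = j)`, and two such steps show that passing from `K = 2m+1` to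
`K + 2` lowers `lb` by `(2q-1)·C(2m+1, m+1)·(q(1-q))^(m+1) > 0`. The upper endpoint `ub` is the
Bayesian posterior of the prior `lb` under likelihoods `q²` and `(1-q)²`, an increasing function
of the prior. Finally every term of `L_{2n+1}(n+1)` is at most `C(2n+1, y)·q^n (1-q)^(n+1)`, and
these binomial coefficients sum to `4^n`, so `lb_{2n+1} ≤ (1-q)(4q(1-q))^n → 0`. -/

section Binomial

variable (q : ℝ)

noncomputable def binPmf (n y : ℕ) : ℝ := n.choose y * q ^ y * (1 - q) ^ (n - y)

noncomputable def binLowerTail (n j : ℕ) : ℝ := ∑ y ∈ range j, binPmf q n y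

theorem sum_range_binPmf (n : ℕ) : ∑ y ∈ range (n + 1), binPmf q n y = 1 := by
  have h := add_pow q (1 - q) n
  rw [add_sub_cancel, one_pow] at h
  rw [h]
  exact sum_congr rfl fun y _ => by rw [binPmf]; ring

theorem binPmf_succ_zero (n : ℕ) : binPmf q (n + 1) 0 = (1 - q) * binPmf q n 0 := by
  simp only [binPmf, Nat.choose_zero_right, Nat.sub_zero]
  ring

theorem binPmf_succ_succ (n y : ℕ) :
    binPmf q (n + 1) (y + 1) = q * binPmf q n y + (1 - q) * binPmf q n (y + 1) := by
  simp only [binPmf, Nat.choose_succ_succ, Nat.cast_add, Nat.add_sub_add_right]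
  rcases lt_or_ge y n with hy | hy
  · rw [show n - y = n - (y + 1) + 1 by omega]
    ring
  · rw [Nat.choose_eq_zero_of_lt (by omega : n < y + 1)]
    ring

theorem binLowerTail_succ_succ (n j : ℕ) :
    binLowerTail q (n + 1) (j + 1) = binLowerTail q n (j + 1) - q * binPmf q n j := by
  have hshift : binLowerTail q n (j + 1) = ∑ y ∈ range j, binPmf q n (y + 1) + binPmf q n 0 :=
    sum_range_succ' _ _
  have hlast : binLowerTail q n (j + 1) = binLowerTail q n j + binPmf q n j := sum_range_succ _ _
  calc binLowerTail q (n + 1) (j + 1)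
      = q * binLowerTail q n j + (1 - q) * binLowerTail q n (j + 1) := by
        rw [binLowerTail, sum_range_succ', binPmf_succ_zero, hshift, binLowerTail]
        simp only [binPmf_succ_succ, sum_add_distrib, ← mul_sum]
        ring
    _ = binLowerTail q n (j + 1) - q * binPmf q n j := by rw [hlast]; ring

theorem binLowerTail_odd_add_two (m : ℕ) :
    binLowerTail q (2 * m + 3) (m + 2) = binLowerTail q (2 * m + 1) (m + 1) -
      (2 * q - 1) * ((2 * m + 1).choose (m + 1) * (q * (1 - q)) ^ (m + 1)) := by
  rw [binLowerTail_succ_succ, binLowerTail_succ_succ, binLowerTail, sum_range_succ, ← binLowerTail]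
  simp only [binPmf, Nat.choose_succ_succ, ← Nat.choose_symm_half, Nat.cast_add, mul_pow,
    show 2 * m + 1 + 1 - (m + 1) = m + 1 by omega, show 2 * m + 1 - (m + 1) = m by omega]
  ring

theorem binLowerTail_add_binTail (K : ℕ) :
    binLowerTail q K ((K + 1) / 2) + binTail q K = 1 := by
  have hupper : binTail q K = ∑ y ∈ Ico ((K + 1) / 2) (K + 1), binPmf q K y := by
    rw [Ico_add_one_right_eq_Icc]
    rfl
  rw [binLowerTail, hupper, sum_range_add_sum_Ico _ (by omega : (K + 1) / 2 ≤ K + 1)]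
  exact sum_range_binPmf q K

theorem lb_eq_binLowerTail (K : ℕ) : lb q K = binLowerTail q K ((K + 1) / 2) := by
  rw [lb, ← binLowerTail_add_binTail q K, add_sub_cancel_right]

end Binomial

section Endpoints

variable {q : ℝ}

theorem binTail_nonneg (hq0 : 0 ≤ q) (hq1 : q ≤ 1) (K : ℕ) : 0 ≤ binTail q K := by
  have : 0 ≤ 1 - q := by linarith
  exact sum_nonneg fun y _ => by positivity

theorem lb_mem_Icc (hq0 : 0 ≤ q) (hq1 : q ≤ 1) (K : ℕ) : lb q K ∈ Set.Icc 0 1 := by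
  refine ⟨?_, by simp [lb, binTail_nonneg hq0 hq1 K]⟩
  rw [lb_eq_binLowerTail]
  have : 0 ≤ 1 - q := by linarith
  exact sum_nonneg fun y _ => by rw [binPmf]; positivity

theorem lb_odd_add_two_lt (hq : 1 / 2 < q) (hq1 : q < 1) {K : ℕ} (hK : Odd K) :
    lb q (K + 2) < lb q K := by
  obtain ⟨m, rfl⟩ := hK
  have hdrop : 0 < (2 * q - 1) * ((2 * m + 1).choose (m + 1) * (q * (1 - q)) ^ (m + 1)) := by
    have : 0 < 1 - q := by linarith
    have : 0 < 2 * q - 1 := by linarith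
    have : 0 < q := by linarith
    have := Nat.choose_pos (show m + 1 ≤ 2 * m + 1 by omega)
    positivity
  rw [lb_eq_binLowerTail, lb_eq_binLowerTail, show (2 * m + 1 + 2 + 1) / 2 = m + 2 by omega,
    show (2 * m + 1 + 1) / 2 = m + 1 by omega, binLowerTail_odd_add_two]
  linarith

theorem lb_odd_le (hq : 1 / 2 ≤ q) (hq1 : q ≤ 1) (n : ℕ) :
    lb q (2 * n + 1) ≤ (1 - q) * (4 * q * (1 - q)) ^ n := by
  have h1q : 0 ≤ 1 - q := by linarith
  have hterm : ∀ y ∈ range (n + 1),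
      binPmf q (2 * n + 1) y ≤ (2 * n + 1).choose y * (q ^ n * (1 - q) ^ (n + 1)) := by
    intro y hy
    have hyn : y ≤ n := Nat.lt_succ_iff.mp (mem_range.mp hy)
    have hpow : (1 - q) ^ (n - y) ≤ q ^ (n - y) := pow_le_pow_left₀ h1q (by linarith) _
    calc binPmf q (2 * n + 1) y
        = (2 * n + 1).choose y * (q ^ y * (1 - q) ^ (n - y) * (1 - q) ^ (n + 1)) := by
          rw [binPmf, show 2 * n + 1 - y = n - y + (n + 1) by omega, pow_add]; ring
      _ ≤ (2 * n + 1).choose y * (q ^ y * q ^ (n - y) * (1 - q) ^ (n + 1)) := by gcongr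
      _ = (2 * n + 1).choose y * (q ^ n * (1 - q) ^ (n + 1)) := by
          rw [← pow_add, Nat.add_sub_cancel' hyn]
  calc lb q (2 * n + 1)
      = binLowerTail q (2 * n + 1) (n + 1) := by
        rw [lb_eq_binLowerTail, show (2 * n + 1 + 1) / 2 = n + 1 by omega]
    _ ≤ ∑ y ∈ range (n + 1), (2 * n + 1).choose y * (q ^ n * (1 - q) ^ (n + 1)) :=
        sum_le_sum hterm
    _ = (1 - q) * (4 * q * (1 - q)) ^ n := by
        rw [← sum_mul, ← Nat.cast_sum, Nat.sum_range_choose_halfway]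
        push_cast
        rw [mul_pow, mul_pow]
        ring

theorem tendsto_lb_odd (hq : 1 / 2 < q) (hq1 : q < 1) :
    Tendsto (fun n : ℕ => lb q (2 * n + 1)) atTop (nhds 0) := by
  have hr0 : 0 ≤ 4 * q * (1 - q) := by nlinarith
  have hr1 : 4 * q * (1 - q) < 1 := by nlinarith
  have hbound : Tendsto (fun n : ℕ => (1 - q) * (4 * q * (1 - q)) ^ n) atTop (nhds 0) := by
    simpa using (tendsto_pow_atTop_nhds_zero_of_lt_one hr0 hr1).const_mul (1 - q)
  exact squeeze_zero (fun n => (lb_mem_Icc (by linarith) hq1.le _).1)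
    (fun n => lb_odd_le hq.le hq1.le n) hbound

theorem ub_one (hq0 : q ≠ 0) (hq1 : q ≠ 1) : ub q 1 = q := by
  have hT : binTail q 1 = q := by simp [binTail]
  have : 1 - q ≠ 0 := sub_ne_zero.mpr hq1.symm
  rw [ub, hT]
  field_simp
  ring

end Endpoints

/-- The posterior probability of a state of prior probability `x` after a signal whose likelihood
is `a` in that state and `b` in the other one. -/
noncomputable def bayesPosterior (a b x : ℝ) : ℝ := a * x / (a * x + b * (1 - x))

theorem strictMonoOn_bayesPosterior {a b : ℝ} (ha : 0 < a) (hb : 0 < b) :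
    StrictMonoOn (bayesPosterior a b) (Set.Icc 0 1) := by
  intro x ⟨hx0, hx1⟩ y ⟨hy0, hy1⟩ hxy
  have hden : ∀ z ∈ Set.Icc (0 : ℝ) 1, 0 < a * z + b * (1 - z) := fun z ⟨hz0, hz1⟩ => by
    nlinarith [mul_nonneg (mul_nonneg ha.le ha.le) hz0, mul_nonneg (mul_nonneg hb.le hb.le)
      (sub_nonneg.mpr hz1), mul_pos ha hb]
  rw [bayesPosterior, bayesPosterior, div_lt_div_iff₀ (hden x ⟨hx0, hx1⟩) (hden y ⟨hy0, hy1⟩)]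
  nlinarith [mul_pos (mul_pos ha hb) (sub_pos.mpr hxy)]

theorem ub_eq_bayesPosterior (q : ℝ) (K : ℕ) :
    ub q K = bayesPosterior (q ^ 2) ((1 - q) ^ 2) (lb q K) := by
  rw [ub, bayesPosterior, lb, sub_sub_cancel]

/-- The endpoints of the incentive-compatible prior interval strictly decrease along odd
batch sizes; moreover ub₁ = q and lb_{2n+1} → 0. -/
theorem ic_interval_decreasing (q : ℝ) (hq : 1 / 2 < q) (hq1 : q < 1) :
    (∀ K : ℕ, Odd K → 0 < K → lb q (K + 2) < lb q K ∧ ub q (K + 2) < ub q K) ∧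
      ub q 1 = q ∧
      Tendsto (fun n : ℕ => lb q (2 * n + 1)) atTop (nhds 0) := by
  have hq0 : 0 < q := by linarith
  refine ⟨fun K hK _ => ?_, ub_one hq0.ne' hq1.ne, tendsto_lb_odd hq hq1⟩
  have hlb := lb_odd_add_two_lt hq hq1 hK
  refine ⟨hlb, ?_⟩
  rw [ub_eq_bayesPosterior, ub_eq_bayesPosterior]
  exact strictMonoOn_bayesPosterior (by positivity) (by nlinarith)
    (lb_mem_Icc hq0.le hq1.le _) (lb_mem_Icc hq0.le hq1.le _) hlb
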